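/- arXiv:2001.06832 — 8 statements merged into one kernel-verified Lean document; each statement's English description precedes it below -/
import Mathlib

section
/- If G is a finite group such that the set {H' : H ≤ G} of derived subgroups of subgroups of G is totally ordered by inclusion, then G is solvable. -/
/-!
Being a DC-group passes to subgroups and quotients, so a minimal non-solvable DC-group would be
simple. In a DC-group the derived subgroups of the proper subgroups form a chain; its largest
member is invariant under conjugation and proper, so in a simple group it is trivial, i.e. every
proper subgroup is abelian. Then for a Sylow `p`-subgroup `P` either `P` is normal, or its
normalizer is abelian and Burnside's transfer theorem gives `P` a normal complement; by
simplicity `P = G` in both cases, and a `p`-group is solvable.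
-/

/-- A group is a `DC`-group if the set of derived subgroups of its subgroups
is a chain under inclusion. -/
def IsDCGroup (G : Type*) [Group G] : Prop :=
  ∀ H K : Subgroup G, ⁅H, H⁆ ≤ ⁅K, K⁆ ∨ ⁅K, K⁆ ≤ ⁅H, H⁆

universe u

open Subgroup

namespace IsDCGroup

variable {G G' : Type*} [Group G] [Group G']

theorem of_injective (f : G →* G') (hf : Function.Injective f) (h : IsDCGroup G') :
    IsDCGroup G := fun A B => by
  simpa only [← map_commutator, map_le_map_iff_of_injective hf] using h (A.map f) (B.map f)

theorem of_surjective (f : G →* G') (hf : Function.Surjective f) (h : IsDCGroup G) :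
    IsDCGroup G' := fun A B => by
  rw [← map_comap_eq_self_of_surjective hf A, ← map_comap_eq_self_of_surjective hf B,
    ← map_commutator, ← map_commutator]
  exact (h (A.comap f) (B.comap f)).imp (fun hle => map_mono hle) (fun hle => map_mono hle)

theorem exists_normal_ne_top_commutator_le [Finite G] [Nontrivial G] (h : IsDCGroup G) :
    ∃ D : Subgroup G, D.Normal ∧ D ≠ ⊤ ∧ ∀ H : Subgroup G, H ≠ ⊤ → ⁅H, H⁆ ≤ D := by
  obtain ⟨M, hM, hmax⟩ := Set.exists_max_image {H : Subgroup G | H ≠ ⊤}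
    (fun H => Nat.card (⁅H, H⁆ : Subgroup G)) (Set.toFinite _) ⟨⊥, bot_ne_top⟩
  have hle : ∀ H : Subgroup G, H ≠ ⊤ → ⁅H, H⁆ ≤ ⁅M, M⁆ := fun H hH =>
    (h H M).elim id fun hMH => (eq_of_le_of_card_ge hMH (hmax H hH)).ge
  refine ⟨⁅M, M⁆, ⟨fun n hn g => ?_⟩, ne_top_of_le_ne_top hM M.commutator_le_self, hle⟩
  let c : G →* G := MulAut.conj g
  have hc : Function.Injective c := (MulAut.conj g).injective
  have hconj : M.map c ≠ ⊤ := fun htop => hM <| by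
    rw [← comap_map_eq_self_of_injective hc M, htop, comap_top]
  exact hle _ hconj (map_commutator M M c ▸ mem_map_of_mem c hn)

end IsDCGroup

theorem isSolvable_of_forall_isSimpleGroup {P : ∀ (G : Type u) [Group G], Prop}
    (of_normal : ∀ (G : Type u) [Group G] (N : Subgroup G), N.Normal → P G → P N)
    (of_quotient : ∀ (G : Type u) [Group G] (N : Subgroup G) [N.Normal], P G → P (G ⧸ N))
    (of_simple :
      ∀ (G : Type u) [Group G] [Finite G] [IsSimpleGroup G], P G → Group.IsSolvable G)
    (G : Type u) [hG : Group G] [Finite G] (hP : P G) : Group.IsSolvable G := by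
  induction G using Finite.induction_subsingleton_or_nontrivial generalizing hG with
  | hbase => infer_instance
  | hstep G ih =>
    by_cases hsimple : ∀ N : Subgroup G, N.Normal → N = ⊥ ∨ N = ⊤
    · have : IsSimpleGroup G := ⟨hsimple⟩
      exact of_simple G hP
    push Not at hsimple
    obtain ⟨N, hN, hbot, htop⟩ := hsimple
    have hcard : Nat.card G = Nat.card (G ⧸ N) * Nat.card N :=
      card_eq_card_quotient_mul_card_subgroup N
    have hN1 : 1 < Nat.card N := N.one_lt_card_iff_ne_bot.mpr hbot
    have hQ1 : 1 < Nat.card (G ⧸ N) := N.index_eq_card ▸ one_lt_index_of_ne_top htop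
    have : Group.IsSolvable N :=
      ih N (hcard ▸ lt_mul_of_one_lt_left (by omega) hQ1) (of_normal G N hN hP)
    have : Group.IsSolvable (G ⧸ N) :=
      ih _ (hcard ▸ lt_mul_of_one_lt_right (by omega) hN1) (of_quotient G N hP)
    exact (Group.isSolvable_iff_subgroup_quotient N).mpr ⟨‹_›, ‹_›⟩

namespace IsSimpleGroup

variable {G : Type*} [Group G] [Finite G] [IsSimpleGroup G]

theorem sylow_eq_top_of_normalizer_le_centralizer {p : ℕ} [Fact p.Prime] (hp : p ∣ Nat.card G)
    (P : Sylow p G) (hP : normalizer (P : Set G) ≤ centralizer (P : Set G)) :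
    (P : Subgroup G) = ⊤ := by
  have hK := MonoidHom.ker_transferSylow_isComplement' P hP
  rcases eq_bot_or_eq_top_of_normal _ (MonoidHom.transferSylow P hP).normal_ker with hbot | htop
  · exact isComplement'_bot_left.mp (hbot ▸ hK)
  · exact absurd (isComplement'_top_left.mp (htop ▸ hK)) (P.ne_bot_of_dvd_card hp)

theorem isSolvable_of_forall_ne_top_commutator_eq_bot
    (h : ∀ H : Subgroup G, H ≠ ⊤ → ⁅H, H⁆ = ⊥) : Group.IsSolvable G := by
  obtain ⟨p, hp, hpG⟩ := Nat.exists_prime_and_dvd (Finite.one_lt_card (α := G)).ne'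
  have := Fact.mk hp
  obtain ⟨P⟩ : Nonempty (Sylow p G) := inferInstance
  have hPtop : (P : Subgroup G) = ⊤ := by
    by_cases hN : normalizer (P : Set G) = ⊤
    · exact (eq_bot_or_eq_top_of_normal _ (normalizer_eq_top_iff.mp hN)).resolve_left
        (P.ne_bot_of_dvd_card hpG)
    · refine sylow_eq_top_of_normalizer_le_centralizer hpG P ?_
      exact (commutator_eq_bot_iff_le_centralizer.mp (h _ hN)).trans (centralizer_le le_normalizer)
  have : IsPGroup p G := (hPtop ▸ P.isPGroup').of_equiv topEquiv
  have := this.isNilpotent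
  infer_instance

end IsSimpleGroup

theorem IsDCGroup.isSolvable_of_isSimpleGroup {G : Type*} [Group G] [Finite G] [IsSimpleGroup G]
    (h : IsDCGroup G) : Group.IsSolvable G := by
  obtain ⟨D, hD, hDtop, hle⟩ := h.exists_normal_ne_top_commutator_le
  have hDbot : D = ⊥ := (IsSimpleGroup.eq_bot_or_eq_top_of_normal D hD).resolve_right hDtop
  exact IsSimpleGroup.isSolvable_of_forall_ne_top_commutator_eq_bot fun H hH =>
    le_bot_iff.mp (hDbot ▸ hle H hH)

theorem dc_group_solvable (G : Type*) [Group G] [Finite G] (h : IsDCGroup G) :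
    IsSolvable G :=
  isSolvable_of_forall_isSimpleGroup (P := IsDCGroup)
    (fun _ _ N _ hN => hN.of_injective N.subtype N.subtype_injective)
    (fun _ _ N _ hN => hN.of_surjective (QuotientGroup.mk' N) (QuotientGroup.mk'_surjective N))
    (fun _ _ _ _ hN => hN.isSolvable_of_isSimpleGroup) G h
end

section
/- If G is a finite DC-group, then there exists a prime p such that G = P ⋊ A is a semidirect product of a Sylow p-subgroup P of G and an abelian p'-Hall subgroup A of G. -/
/-!
In a DC-group the nontrivial derived subgroups form a chain, so they all contain the least
one, and a prime `q` dividing its order divides the order of every nontrivial derived subgroup.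
Hence a subgroup whose derived subgroup lies in a `q'`-subgroup is abelian. If `R` is a Sylow
`r`-subgroup with `r ≠ q` and `g` normalizes `R`, the derived subgroup of `R⟨g⟩` lies in `R`,
so `N(R) = C(R)` and Burnside's transfer theorem gives a normal `r`-complement; it contains a
Sylow `q`-subgroup `Q`. Thus the normal closure of `Q` is a `q`-group, i.e. `Q` is normal, and
a Schur–Zassenhaus complement of `Q` is a `q'`-group, hence abelian.
-/

open Subgroup

namespace Subgroup

variable {G : Type*} [Group G]

theorem commutator_sup_zpowers_le_of_mem_normalizer {R : Subgroup G} {g : G}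
    (hg : g ∈ normalizer (R : Set G)) : ⁅R ⊔ zpowers g, R ⊔ zpowers g⁆ ≤ R := by
  let M := normalizer (R : Set G)
  let R₀ : Subgroup M := R.subgroupOf M
  let φ : M →* M ⧸ R₀ := QuotientGroup.mk' R₀
  let H₀ : Subgroup M := R₀ ⊔ zpowers ⟨g, hg⟩
  have hR : R₀.map M.subtype = R := by
    rw [subgroupOf_map_subtype, inf_of_le_left R.le_normalizer]
  have hH₀ : H₀.map M.subtype = R ⊔ zpowers g := by
    rw [map_sup, hR, MonoidHom.map_zpowers]; rfl
  have hφH₀ : H₀.map φ = zpowers (φ ⟨g, hg⟩) := by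
    rw [map_sup, MonoidHom.map_zpowers, QuotientGroup.map_mk'_self, bot_sup_eq]
  have hcomm : ⁅H₀, H₀⁆ ≤ R₀ := by
    rw [← QuotientGroup.ker_mk' R₀, ← Subgroup.map_eq_bot_iff, map_commutator, hφH₀,
      commutator_self_eq_bot_iff]
    infer_instance
  calc ⁅R ⊔ zpowers g, R ⊔ zpowers g⁆ = ⁅H₀, H₀⁆.map M.subtype := by rw [map_commutator, hH₀]
    _ ≤ R := hR ▸ map_mono hcomm

end Subgroup

theorem IsPGroup.le_ker_of_ne {G K : Type*} [Group G] [Group K] {p r : ℕ} [Fact p.Prime]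
    [Fact r.Prime] (hpr : p ≠ r) {H : Subgroup G} (hH : IsPGroup p H) (hK : IsPGroup r K)
    (f : G →* K) : H ≤ f.ker := by
  rw [← Subgroup.map_eq_bot_iff, ← disjoint_self]
  exact IsPGroup.disjoint_of_ne p r hpr _ _ (hH.map f) (hK.to_subgroup _)

theorem Sylow.normal_of_forall_prime_ne {G : Type*} [Group G] [Finite G] {p : ℕ} [Fact p.Prime]
    (P : Sylow p G)
    (h : ∀ r : ℕ, r.Prime → r ≠ p → ∃ N : Subgroup G, N.Normal ∧ ¬ r ∣ Nat.card N ∧ ↑P ≤ N) :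
    (P : Subgroup G).Normal := by
  have hN : IsPGroup p (normalClosure (P : Set G)) := by
    refine IsPGroup.of_card <| Nat.eq_prime_pow_of_unique_prime_dvd Nat.card_pos.ne'
      fun hr hdvd => ?_
    by_contra hrp
    obtain ⟨N, hN, hrN, hPN⟩ := h _ hr hrp
    exact hrN (hdvd.trans (card_dvd_of_le (normalClosure_le_normal hPN)))
  rw [← P.is_maximal' hN subset_normalClosure]
  exact normalClosure_normal

section DivisorOfDerivedSubgroups

variable {G : Type*} [Group G] {q : ℕ}

theorem commutator_eq_bot_of_commutator_le
    (hq : ∀ H : Subgroup G, ⁅H, H⁆ ≠ ⊥ → q ∣ Nat.card (⁅H, H⁆ : Subgroup G))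
    {H K : Subgroup G} (hHK : ⁅H, H⁆ ≤ K) (hK : ¬ q ∣ Nat.card K) : ⁅H, H⁆ = ⊥ := by
  by_contra hH
  exact hK ((hq H hH).trans (card_dvd_of_le hHK))

theorem commutator_self_eq_bot_of_not_dvd_card
    (hq : ∀ H : Subgroup G, ⁅H, H⁆ ≠ ⊥ → q ∣ Nat.card (⁅H, H⁆ : Subgroup G))
    {A : Subgroup G} (hA : ¬ q ∣ Nat.card A) : ⁅A, A⁆ = ⊥ :=
  commutator_eq_bot_of_commutator_le hq ((commutator_le_sup A A).trans (sup_idem A).le) hA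

theorem normalizer_le_centralizer_of_not_dvd_card
    (hq : ∀ H : Subgroup G, ⁅H, H⁆ ≠ ⊥ → q ∣ Nat.card (⁅H, H⁆ : Subgroup G))
    {R : Subgroup G} (hR : ¬ q ∣ Nat.card R) :
    normalizer (R : Set G) ≤ centralizer (R : Set G) := by
  intro g hg
  have hH := commutator_eq_bot_of_commutator_le hq
    (commutator_sup_zpowers_le_of_mem_normalizer hg) hR
  exact centralizer_le (SetLike.coe_subset_coe.mpr le_sup_left)
    (commutator_eq_bot_iff_le_centralizer.mp hH (mem_sup_right (mem_zpowers g)))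

theorem exists_normal_not_dvd_card_and_sylow_le [Finite G] [Fact q.Prime]
    (hq : ∀ H : Subgroup G, ⁅H, H⁆ ≠ ⊥ → q ∣ Nat.card (⁅H, H⁆ : Subgroup G))
    (Q : Sylow q G) {r : ℕ} [Fact r.Prime] (hrq : r ≠ q) :
    ∃ N : Subgroup G, N.Normal ∧ ¬ r ∣ Nat.card N ∧ ↑Q ≤ N := by
  obtain ⟨R⟩ : Nonempty (Sylow r G) := Sylow.nonempty
  have hqR : ¬ q ∣ Nat.card R := by
    obtain ⟨n, hn⟩ := IsPGroup.iff_card.mp R.isPGroup'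
    exact hn ▸ fun h => hrq (Nat.prime_eq_prime_of_dvd_pow Fact.out Fact.out h).symm
  have hR := normalizer_le_centralizer_of_not_dvd_card hq hqR
  exact ⟨_, MonoidHom.normal_ker _, MonoidHom.not_dvd_card_ker_transferSylow R hR,
    Q.isPGroup'.le_ker_of_ne hrq.symm R.isPGroup' _⟩

theorem sylow_normal_of_dvd_card_commutator [Finite G] [Fact q.Prime]
    (hq : ∀ H : Subgroup G, ⁅H, H⁆ ≠ ⊥ → q ∣ Nat.card (⁅H, H⁆ : Subgroup G)) (Q : Sylow q G) :
    (Q : Subgroup G).Normal :=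
  Q.normal_of_forall_prime_ne fun _ hr hrq =>
    have := Fact.mk hr
    exists_normal_not_dvd_card_and_sylow_le hq Q hrq

end DivisorOfDerivedSubgroups

namespace IsDCGroup

variable {G : Type*} [Group G] [Finite G]

theorem exists_least_ne_bot_commutator (h : IsDCGroup G) {H₀ : Subgroup G}
    (h₀ : ⁅H₀, H₀⁆ ≠ ⊥) :
    ∃ D : Subgroup G, ⁅D, D⁆ ≠ ⊥ ∧ ∀ H : Subgroup G, ⁅H, H⁆ ≠ ⊥ → ⁅D, D⁆ ≤ ⁅H, H⁆ := by
  obtain ⟨_, ⟨D, rfl, hD⟩, hmin⟩ := exists_minimal_of_wellFoundedLT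
    (fun K : Subgroup G => ∃ H : Subgroup G, ⁅H, H⁆ = K ∧ K ≠ ⊥) ⟨_, H₀, rfl, h₀⟩
  exact ⟨D, hD, fun H hH => (h D H).elim id (hmin ⟨H, rfl, hH⟩)⟩

theorem exists_prime_dvd_card_commutator (h : IsDCGroup G) :
    ∃ q : ℕ, q.Prime ∧ ∀ H : Subgroup G, ⁅H, H⁆ ≠ ⊥ → q ∣ Nat.card (⁅H, H⁆ : Subgroup G) := by
  by_cases habel : ∀ H : Subgroup G, ⁅H, H⁆ = ⊥
  · exact ⟨2, Nat.prime_two, fun H hH => absurd (habel H) hH⟩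
  push Not at habel
  obtain ⟨H₀, h₀⟩ := habel
  obtain ⟨D, hD, hDle⟩ := h.exists_least_ne_bot_commutator h₀
  obtain ⟨q, hq, hqD⟩ := Nat.exists_prime_and_dvd (mt card_eq_one.mp hD)
  exact ⟨q, hq, fun H hH => hqD.trans (card_dvd_of_le (hDle H hH))⟩

end IsDCGroup

theorem dc_group_semidirect (G : Type*) [Group G] [Finite G] (h : IsDCGroup G) :
    ∃ (p : ℕ) (_ : Fact p.Prime) (P : Sylow p G) (A : Subgroup G),
      (P : Subgroup G).Normal ∧
      (∀ a ∈ A, ∀ b ∈ A, a * b = b * a) ∧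
      ¬ p ∣ Nat.card A ∧
      (P : Subgroup G) ⊓ A = ⊥ ∧ (P : Subgroup G) ⊔ A = ⊤ := by
  obtain ⟨q, hq, hdvd⟩ := h.exists_prime_dvd_card_commutator
  have := Fact.mk hq
  obtain ⟨Q⟩ : Nonempty (Sylow q G) := Sylow.nonempty
  have hQ := sylow_normal_of_dvd_card_commutator hdvd Q
  obtain ⟨A, hA⟩ := exists_right_complement'_of_coprime Q.card_coprime_index
  have hqA : ¬ q ∣ Nat.card A := hA.symm.index_eq_card ▸ Q.not_dvd_index
  have hAA := commutator_self_eq_bot_of_not_dvd_card hdvd hqA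
  refine ⟨q, ‹_›, Q, A, hQ, fun a ha b hb => ?_, hqA, disjoint_iff.mp hA.disjoint,
    hA.sup_eq_top⟩
  exact mem_centralizer_iff.mp (commutator_eq_bot_iff_le_centralizer.mp hAA hb) a ha
end

section
/- If G is a finite DC-group and H is a non-abelian subgroup of G, then H' is a normal subgroup of G. -/
theorem dc_derived_normal (G : Type*) [Group G] [Finite G] (h : IsDCGroup G)
    (H : Subgroup G) (hH : ¬ ∀ a ∈ H, ∀ b ∈ H, a * b = b * a) :
    (⁅H, H⁆ : Subgroup G).Normal := by
  have key : ∀ g : G, Subgroup.map (MulAut.conj g).toMonoidHom ⁅H, H⁆ = ⁅H, H⁆ := by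
    intro g
    have hmap : Subgroup.map (MulAut.conj g).toMonoidHom ⁅H, H⁆
        = ⁅Subgroup.map (MulAut.conj g).toMonoidHom H,
           Subgroup.map (MulAut.conj g).toMonoidHom H⁆ :=
      Subgroup.map_commutator H H _
    have hcard : ∀ K : Subgroup G,
        Nat.card (Subgroup.map (MulAut.conj g).toMonoidHom K) = Nat.card K := by
      intro K
      exact Nat.card_congr (K.equivMapOfInjective _ (MulAut.conj g).injective).symm.toEquiv
    rcases h H (Subgroup.map (MulAut.conj g).toMonoidHom H) with hle | hle
    · rw [← hmap] at hle
      exact (Subgroup.eq_of_le_of_card_ge hle (le_of_eq (hcard _))).symm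
    · rw [← hmap] at hle
      exact Subgroup.eq_of_le_of_card_ge hle (le_of_eq (hcard _).symm)
  constructor
  intro n hn g
  have := key g
  rw [SetLike.ext_iff] at this
  have := (this (g * n * g⁻¹)).mp ⟨n, hn, rfl⟩
  exact this
end

section
/- Every finite p-group whose derived subgroup is cyclic is a DC-group. -/
/-- In a finite cyclic group, if `orderOf x ∣ orderOf y` then `x ∈ zpowers y`. -/
lemma mem_zpowers_of_orderOf_dvd {α : Type*} [Group α] [Finite α] [IsCyclic α]
    {x y : α} (h : orderOf x ∣ orderOf y) : x ∈ Subgroup.zpowers y := by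
  classical
  cases nonempty_fintype α
  set n := orderOf y with hn
  have hn0 : 0 < n := orderOf_pos y
  have hsub : ((Subgroup.zpowers y : Subgroup α) : Set α) ⊆ {z : α | z ^ n = 1} := by
    rintro z ⟨k, rfl⟩
    simp only [Set.mem_setOf_eq]
    rw [← zpow_natCast, ← zpow_mul, mul_comm, zpow_mul, zpow_natCast, pow_orderOf_eq_one,
      one_zpow]
  have hle := IsCyclic.card_pow_eq_one_le (α := α) hn0
  have h1 : Set.ncard {z : α | z ^ n = 1} ≤ n := by
    rw [← Nat.card_coe_set_eq, Nat.card_eq_fintype_card]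
    simpa [Fintype.card_subtype] using hle
  have h2 : ((Subgroup.zpowers y : Subgroup α) : Set α).ncard = n := by
    rw [← Nat.card_coe_set_eq]
    exact Nat.card_zpowers y
  have hset : ((Subgroup.zpowers y : Subgroup α) : Set α) = {z : α | z ^ n = 1} :=
    Set.eq_of_subset_of_ncard_le hsub (by rw [h2]; exact h1)
  have hx : x ∈ {z : α | z ^ n = 1} := orderOf_dvd_iff_pow_eq_one.mp h
  rw [← hset] at hx
  exact hx

/-- Subgroups of a finite cyclic `p`-group are totally ordered. -/
lemma subgroup_le_total_of_cyclic_pgroup {p : ℕ} [Fact p.Prime] {C : Type*} [Group C]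
    [Finite C] [IsCyclic C] (hC : IsPGroup p C) (A B : Subgroup C) : A ≤ B ∨ B ≤ A := by
  classical
  obtain ⟨⟨a, haA⟩, hga⟩ := IsCyclic.exists_generator (α := A)
  obtain ⟨⟨b, hbB⟩, hgb⟩ := IsCyclic.exists_generator (α := B)
  have hAeq : A = Subgroup.zpowers a := by
    apply le_antisymm
    · intro x hx
      obtain ⟨k, hk⟩ := hga ⟨x, hx⟩
      exact ⟨k, by simpa [Subtype.ext_iff] using hk⟩
    · exact Subgroup.zpowers_le.mpr haA
  have hBeq : B = Subgroup.zpowers b := by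
    apply le_antisymm
    · intro x hx
      obtain ⟨k, hk⟩ := hgb ⟨x, hx⟩
      exact ⟨k, by simpa [Subtype.ext_iff] using hk⟩
    · exact Subgroup.zpowers_le.mpr hbB
  obtain ⟨ka, hka⟩ := (IsPGroup.iff_orderOf).mp hC a
  obtain ⟨kb, hkb⟩ := (IsPGroup.iff_orderOf).mp hC b
  rcases le_total ka kb with hk | hk
  · left
    rw [hAeq, hBeq, Subgroup.zpowers_le]
    exact mem_zpowers_of_orderOf_dvd (by rw [hka, hkb]; exact pow_dvd_pow p hk)
  · right
    rw [hAeq, hBeq, Subgroup.zpowers_le]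
    exact mem_zpowers_of_orderOf_dvd (by rw [hka, hkb]; exact pow_dvd_pow p hk)

theorem cyclic_derived_dc (p : ℕ) [Fact p.Prime] (G : Type*) [Group G] [Finite G]
    (hG : IsPGroup p G) (hc : IsCyclic (commutator G)) : IsDCGroup G := by
  intro H K
  have hCp : IsPGroup p (commutator G) := hG.to_subgroup (commutator G)
  have hH : ⁅H, H⁆ ≤ commutator G := Subgroup.commutator_mono le_top le_top
  have hK : ⁅K, K⁆ ≤ commutator G := Subgroup.commutator_mono le_top le_top
  have := subgroup_le_total_of_cyclic_pgroup hCp (⁅H, H⁆.subgroupOf (commutator G))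
    (⁅K, K⁆.subgroupOf (commutator G))
  rcases this with hle | hle
  · left
    intro x hx
    have hmem : (⟨x, hH hx⟩ : commutator G) ∈ ⁅H, H⁆.subgroupOf (commutator G) :=
      Subgroup.mem_subgroupOf.mpr hx
    exact Subgroup.mem_subgroupOf.mp (hle hmem)
  · right
    intro x hx
    have hmem : (⟨x, hK hx⟩ : commutator G) ∈ ⁅K, K⁆.subgroupOf (commutator G) :=
      Subgroup.mem_subgroupOf.mpr hx
    exact Subgroup.mem_subgroupOf.mp (hle hmem)
end

section
/- The group SL(2,3) is a DC-group that is not supersolvable and has a non-abelian Sylow 2-subgroup (isomorphic to the quaternion group Q₈). -/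
/-- A group is supersolvable if it has a normal series (all terms normal in the
whole group) with cyclic factors. -/
def IsSupersolvable (G : Type*) [Group G] : Prop :=
  ∃ (n : ℕ) (s : Fin (n + 1) → Subgroup G),
    s 0 = ⊥ ∧ s (Fin.last n) = ⊤ ∧ (∀ i, (s i).Normal) ∧
    ∀ i : Fin n, s i.castSucc ≤ s i.succ ∧
      ∀ (_ : (s i.castSucc).Normal),
        IsCyclic (↥(s i.succ) ⧸ (s i.castSucc).subgroupOf (s i.succ))

open Subgroup
open scoped MatrixGroups commutatorElement

theorem Subgroup.le_total_of_le_of_prime_card {G : Type*} [Group G] {Z A B : Subgroup G}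
    (hZ : (Nat.card Z).Prime) (hA : A ≤ Z) (hB : B ≤ Z) : A ≤ B ∨ B ≤ A := by
  have : Fact (Nat.card Z).Prime := ⟨hZ⟩
  rcases (A.subgroupOf Z).eq_bot_or_eq_top_of_prime_card with h | h
  · exact .inl ((subgroupOf_eq_bot.mp h).eq_bot_of_le hA ▸ bot_le)
  · exact .inr (hB.trans (subgroupOf_eq_top.mp h))

theorem isDCGroup_of_commutator_le_or_eq {G : Type*} [Group G] {Z Q : Subgroup G}
    (hZ : (Nat.card Z).Prime) (hZQ : Z ≤ Q)
    (h : ∀ H : Subgroup G, ⁅H, H⁆ ≤ Z ∨ ⁅H, H⁆ = Q) : IsDCGroup G := by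
  intro H K
  rcases h H with hH | hH <;> rcases h K with hK | hK
  · exact le_total_of_le_of_prime_card hZ hH hK
  · exact .inl (hK ▸ hH.trans hZQ)
  · exact .inr (hH ▸ hK.trans hZQ)
  · exact .inl (hH.le.trans hK.ge)

theorem Subgroup.isMulCommutative_of_isCyclic_quotient_of_le_center {G : Type*} [Group G]
    {H N : Subgroup G} [(N.subgroupOf H).Normal] [IsCyclic (H ⧸ N.subgroupOf H)]
    (hN : N ≤ center G) : IsMulCommutative H := by
  refine (QuotientGroup.mk' (N.subgroupOf H)).isMulCommutative_of_isCyclic_of_ker_le_center ?_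
  rw [QuotientGroup.ker_mk']
  intro x hx
  exact mem_center_iff.mpr fun g ↦ Subtype.ext (mem_center_iff.mp (hN hx) g)

theorem IsSupersolvable.exists_normal_isMulCommutative_not_le_center {G : Type*} [Group G]
    (hG : IsSupersolvable G) (hcenter : center G ≠ ⊤) :
    ∃ N : Subgroup G, N.Normal ∧ IsMulCommutative N ∧ ¬ N ≤ center G := by
  obtain ⟨n, s, h0, hlast, hnormal, hstep⟩ := hG
  suffices h : ∀ i, s i ≤ center G ∨
      ∃ N : Subgroup G, N.Normal ∧ IsMulCommutative N ∧ ¬ N ≤ center G from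
    (h (Fin.last n)).resolve_left (hlast ▸ fun h ↦ hcenter (top_le_iff.mp h))
  refine Fin.induction (h0 ▸ .inl bot_le) fun i ih ↦ ?_
  refine ih.elim (fun hi ↦ ?_) .inr
  have := (hnormal i.castSucc).subgroupOf (s i.succ)
  have := (hstep i).2 (hnormal _)
  by_cases hsucc : s i.succ ≤ center G
  · exact .inl hsucc
  · exact .inr ⟨_, hnormal _, isMulCommutative_of_isCyclic_quotient_of_le_center hi, hsucc⟩

namespace SL23

theorem pow_four_mul_eq_one :
    ∀ a b : SL(2, ZMod 3), a ^ 4 = 1 → b ^ 4 = 1 → (a * b) ^ 4 = 1 := by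
  decide +kernel

def quaternion : Subgroup SL(2, ZMod 3) where
  carrier := {x | x ^ 4 = 1}
  mul_mem' := pow_four_mul_eq_one _ _
  one_mem' := one_pow 4
  inv_mem' {x} (hx : x ^ 4 = 1) := by rw [Set.mem_ofPred_eq, inv_pow, hx, inv_one]

theorem mem_quaternion {x : SL(2, ZMod 3)} : x ∈ quaternion ↔ x ^ 4 = 1 := Iff.rfl

instance : DecidablePred (· ∈ quaternion) := fun _ ↦ decidable_of_iff _ mem_quaternion.symm

instance : quaternion.Normal where
  conj_mem x (hx : x ^ 4 = 1) g := by rw [mem_quaternion, conj_pow, hx, mul_one, mul_inv_cancel]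

theorem card_quaternion : Nat.card quaternion = 8 := by
  rw [Nat.card_eq_fintype_card]; decide

theorem index_quaternion : quaternion.index = 3 := by
  have h := card_mul_index quaternion
  have hcard : Fintype.card SL(2, ZMod 3) = 24 := by decide
  rw [card_quaternion, Nat.card_eq_fintype_card, hcard] at h
  omega

theorem commutator_le_quaternion : commutator SL(2, ZMod 3) ≤ quaternion := by
  have : IsCyclic (SL(2, ZMod 3) ⧸ quaternion) := isCyclic_of_prime_card index_quaternion
  exact Normal.quotient_commutative_iff_commutator_le.mp inferInstance

theorem card_center : Nat.card (center SL(2, ZMod 3)) = 2 := by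
  rw [Nat.card_eq_fintype_card]; decide

theorem center_le_quaternion : center SL(2, ZMod 3) ≤ quaternion := by
  rw [SetLike.le_def]; decide +kernel

theorem commutator_quaternion_le_center :
    ⁅quaternion, quaternion⁆ ≤ center SL(2, ZMod 3) := by
  rw [commutator_le]; decide +kernel

theorem quaternion_le_of_not_commute {K : Subgroup SL(2, ZMod 3)} {x y : SL(2, ZMod 3)}
    (hx : x ∈ quaternion) (hy : y ∈ quaternion) (hxy : x * y ≠ y * x) (hxK : x ∈ K)
    (hyK : y ∈ K) : quaternion ≤ K := by
  have hwords : ∀ x y : SL(2, ZMod 3), x ^ 4 = 1 → y ^ 4 = 1 → x * y ≠ y * x →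
      ∀ z : SL(2, ZMod 3), z ^ 4 = 1 →
        ∃ k : Fin 4, ∃ l : Fin 2, z = x ^ (k : ℕ) * y ^ (l : ℕ) := by
    decide +kernel
  intro z hz
  obtain ⟨k, l, rfl⟩ := hwords x y hx hy hxy z hz
  exact mul_mem (pow_mem hxK _) (pow_mem hyK _)

theorem conj_not_commute_of_not_mem_quaternion :
    ∀ g : SL(2, ZMod 3), g ∉ quaternion → ∀ x ∈ quaternion, x ∉ center SL(2, ZMod 3) →
      x * (g * x * g⁻¹) ≠ g * x * g⁻¹ * x := by
  decide +kernel

theorem commutator_le_center_or_eq_quaternion (H : Subgroup SL(2, ZMod 3)) :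
    ⁅H, H⁆ ≤ center SL(2, ZMod 3) ∨ ⁅H, H⁆ = quaternion := by
  refine or_iff_not_imp_left.mpr fun hcenter ↦ le_antisymm ?_ ?_
  · exact (commutator_mono le_top le_top).trans commutator_le_quaternion
  obtain ⟨x, hxH', hx⟩ := SetLike.not_le_iff_exists.mp hcenter
  have hHQ : ¬ H ≤ quaternion := fun h ↦
    hcenter ((commutator_mono h h).trans commutator_quaternion_le_center)
  obtain ⟨g, hg, hgQ⟩ := SetLike.not_le_iff_exists.mp hHQ
  have hxQ : x ∈ quaternion := commutator_le_quaternion (commutator_mono le_top le_top hxH')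
  have hconj : g * x * g⁻¹ ∈ ⁅H, H⁆ :=
    (mem_normalizer_iff.mp (normalizer_commutator_ge_left H H hg) x).mp hxH'
  exact quaternion_le_of_not_commute hxQ (Normal.conj_mem inferInstance x hxQ g)
    (conj_not_commute_of_not_mem_quaternion g hgQ x hxQ hx) hxH' hconj

theorem isDCGroup : IsDCGroup SL(2, ZMod 3) :=
  isDCGroup_of_commutator_le_or_eq (by rw [card_center]; exact Nat.prime_two)
    center_le_quaternion commutator_le_center_or_eq_quaternion

theorem le_center_of_normal_of_isMulCommutative {N : Subgroup SL(2, ZMod 3)} [N.Normal]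
    [IsMulCommutative N] : N ≤ center SL(2, ZMod 3) := by
  have hconj : ∀ x : SL(2, ZMod 3), x ∉ center SL(2, ZMod 3) →
      ∃ g : SL(2, ZMod 3), x * (g * x * g⁻¹) ≠ g * x * g⁻¹ * x := by
    decide +kernel
  intro x hxN
  by_contra hx
  obtain ⟨g, hg⟩ := hconj x hx
  have hgx : g * x * g⁻¹ ∈ N := Normal.conj_mem inferInstance x hxN g
  exact hg (congrArg Subtype.val (IsMulCommutative.is_comm.comm (⟨x, hxN⟩ : N) ⟨_, hgx⟩))

theorem center_ne_top : center SL(2, ZMod 3) ≠ ⊤ := by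
  rw [Ne, eq_top_iff']; decide +kernel

theorem not_isSupersolvable : ¬ IsSupersolvable SL(2, ZMod 3) := fun h ↦ by
  obtain ⟨N, _, _, hNc⟩ := h.exists_normal_isMulCommutative_not_le_center center_ne_top
  exact hNc le_center_of_normal_of_isMulCommutative

def sylowTwo : Sylow 2 SL(2, ZMod 3) :=
  (IsPGroup.of_card (n := 3) card_quaternion).toSylow (by rw [index_quaternion]; decide)

-- `i ↦ a 1` and `j ↦ xa 0`: both square to `-1`, and `j i j⁻¹ = i⁻¹`.
def quaternionI : quaternion :=
  ⟨⟨!![0, -1; 1, 0], by decide⟩, mem_quaternion.mpr (by decide)⟩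

def quaternionJ : quaternion :=
  ⟨⟨!![1, 1; 1, -1], by decide⟩, mem_quaternion.mpr (by decide)⟩

def quaternionGroupHom : QuaternionGroup 2 →* quaternion where
  toFun
    | .a k => quaternionI ^ k.val
    | .xa k => quaternionJ * quaternionI ^ k.val
  map_one' := rfl
  map_mul' := by decide +kernel

noncomputable def quaternionMulEquiv : QuaternionGroup 2 ≃* quaternion :=
  MulEquiv.ofBijective quaternionGroupHom <|
    ((injective_iff_map_eq_one _).mpr (by decide +kernel)).bijective_of_nat_card_le
      (by rw [card_quaternion, Nat.card_eq_fintype_card, QuaternionGroup.card])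

end SL23

theorem sl23_dc_not_supersolvable :
    IsDCGroup (Matrix.SpecialLinearGroup (Fin 2) (ZMod 3)) ∧
    ¬ IsSupersolvable (Matrix.SpecialLinearGroup (Fin 2) (ZMod 3)) ∧
    ∃ P : Sylow 2 (Matrix.SpecialLinearGroup (Fin 2) (ZMod 3)),
      (¬ ∀ a b : (P : Subgroup (Matrix.SpecialLinearGroup (Fin 2) (ZMod 3))),
        a * b = b * a) ∧
      Nonempty ((P : Subgroup (Matrix.SpecialLinearGroup (Fin 2) (ZMod 3))) ≃*
        QuaternionGroup 2) := by
  refine ⟨SL23.isDCGroup, SL23.not_isSupersolvable, SL23.sylowTwo, fun hcomm ↦ ?_,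
    ⟨SL23.quaternionMulEquiv.symm⟩⟩
  have hQ8 : QuaternionGroup.a 1 * .xa 0 = .xa 0 * (.a 1 : QuaternionGroup 2) :=
    SL23.quaternionMulEquiv.injective (by simp only [map_mul]; exact hcomm _ _)
  exact absurd hQ8 (by decide)
end

section
/- Let G be a finite non-abelian p-group and A a finite abelian p-group, and suppose G * A is a central product of G and A. Then G * A is a DC-group if and only if G is a DC-group. Moreover, DS(G * A) = DS(G). -/
open scoped commutatorElement

theorem isDCGroup_iff_isChain (X : Type*) [Group X] :
    IsDCGroup X ↔ IsChain (· ≤ ·) {S : Subgroup X | ∃ H : Subgroup X, S = ⁅H, H⁆} := by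
  constructor
  · rintro hX _ ⟨H, rfl⟩ _ ⟨K, rfl⟩ -
    exact hX H K
  · intro hX H K
    exact hX.total ⟨H, rfl⟩ ⟨K, rfl⟩

namespace Subgroup

variable {X : Type*} [Group X]

theorem normal_of_le_center {A : Subgroup X} (hA : A ≤ center X) : A.Normal :=
  ⟨fun a ha g => by rwa [mem_center_iff.mp (hA ha) g, mul_inv_cancel_right]⟩

theorem le_center_of_sup_eq_top {G A : Subgroup X}
    (hAab : ∀ a ∈ A, ∀ b ∈ A, a * b = b * a) (hprod : G ⊔ A = ⊤)
    (hcomm : ⁅G, A⁆ = ⊥) : A ≤ center X := by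
  have hGA : G ⊔ A ≤ centralizer A :=
    sup_le (commutator_eq_bot_iff_le_centralizer.mp hcomm)
      fun b hb => mem_centralizer_iff.mpr fun a ha => hAab a ha b hb
  rwa [hprod, ← le_centralizer_iff, coe_top, centralizer_univ] at hGA

theorem commutatorElement_mul_left_of_mem_center {g h z : X} (hz : z ∈ center X) :
    ⁅g * z, h⁆ = ⁅g, h⁆ := by
  rw [commutatorElement_def, commutatorElement_def, mul_assoc g z h, ← mem_center_iff.mp hz h]
  group

theorem commutatorElement_mul_right_of_mem_center {g h z : X} (hz : z ∈ center X) :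
    ⁅g, h * z⁆ = ⁅g, h⁆ := by
  rw [← commutatorElement_inv, commutatorElement_mul_left_of_mem_center hz, commutatorElement_inv]

theorem commutator_sup_self_of_le_center {A : Subgroup X} (hA : A ≤ center X) (H : Subgroup X) :
    ⁅H ⊔ A, H ⊔ A⁆ = ⁅H, H⁆ := by
  have := normal_of_le_center hA
  refine le_antisymm (commutator_le.mpr fun x hx y hy => ?_)
    (commutator_mono le_sup_left le_sup_left)
  rw [← SetLike.mem_coe, mul_normal] at hx hy
  obtain ⟨h₁, hh₁, a₁, ha₁, rfl⟩ := hx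
  obtain ⟨h₂, hh₂, a₂, ha₂, rfl⟩ := hy
  rw [commutatorElement_mul_left_of_mem_center (hA ha₁),
    commutatorElement_mul_right_of_mem_center (hA ha₂)]
  exact commutator_mem_commutator hh₁ hh₂

theorem inf_sup_assoc_of_le_of_normal {Y N : Subgroup X} [N.Normal] (hN : N ≤ Y)
    (K : Subgroup X) : Y ⊓ K ⊔ N = Y ⊓ (K ⊔ N) := by
  apply SetLike.coe_injective
  rw [mul_normal, inf_mul_assoc Y K N hN, coe_inf, mul_normal]

theorem setOf_commutator_self_eq_of_le_center {G A : Subgroup X} (hA : A ≤ center X)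
    (hprod : G ⊔ A = ⊤) :
    {S : Subgroup X | ∃ H : Subgroup X, S = ⁅H, H⁆} = {S | ∃ H ≤ G, S = ⁅H, H⁆} := by
  have := normal_of_le_center hA
  refine Set.Subset.antisymm ?_ fun S ⟨H, _, hS⟩ => ⟨H, hS⟩
  rintro _ ⟨H, rfl⟩
  have hmod : (H ⊔ A) ⊓ G ⊔ A = H ⊔ A := by
    rw [inf_sup_assoc_of_le_of_normal le_sup_right, hprod, inf_top_eq]
  refine ⟨(H ⊔ A) ⊓ G, inf_le_right, ?_⟩
  rw [← commutator_sup_self_of_le_center hA ((H ⊔ A) ⊓ G), hmod,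
    commutator_sup_self_of_le_center hA]

theorem isDCGroup_iff_isChain (G : Subgroup X) :
    IsDCGroup G ↔ IsChain (· ≤ ·) {S : Subgroup X | ∃ H ≤ G, S = ⁅H, H⁆} := by
  let φ : Subgroup G ↪o Subgroup X :=
    OrderEmbedding.ofMapLEIff (map G.subtype) fun _ _ => map_subtype_le_map_subtype
  have himage : {S : Subgroup X | ∃ H ≤ G, S = ⁅H, H⁆} =
      φ '' {S : Subgroup G | ∃ H : Subgroup G, S = ⁅H, H⁆} := by
    ext S
    constructor
    · rintro ⟨H, hH, rfl⟩
      refine ⟨_, ⟨H.subgroupOf G, rfl⟩, ?_⟩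
      simp only [φ, OrderEmbedding.coe_ofMapLEIff, map_commutator, map_subgroupOf_eq_of_le hH]
    · rintro ⟨_, ⟨H, rfl⟩, rfl⟩
      exact ⟨H.map G.subtype, map_subtype_le H, map_commutator H H G.subtype⟩
  rw [himage, IsChain.image_embedding_iff, _root_.isDCGroup_iff_isChain]

end Subgroup

theorem central_product_dc_general (X : Type*) [Group X]
    (G A : Subgroup X)
    (hAab : ∀ a ∈ A, ∀ b ∈ A, a * b = b * a)
    (hprod : G ⊔ A = ⊤) (hcomm : ⁅G, A⁆ = (⊥ : Subgroup X)) :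
    (IsDCGroup X ↔ IsDCGroup G) ∧
    {S : Subgroup X | ∃ H : Subgroup X, S = ⁅H, H⁆} =
      {S : Subgroup X | ∃ H : Subgroup X, H ≤ G ∧ S = ⁅H, H⁆} := by
  have hA := Subgroup.le_center_of_sup_eq_top hAab hprod hcomm
  have hDS := Subgroup.setOf_commutator_self_eq_of_le_center hA hprod
  refine ⟨?_, hDS⟩
  rw [isDCGroup_iff_isChain, G.isDCGroup_iff_isChain, hDS]

theorem central_product_dc (p : ℕ) [Fact p.Prime] (X : Type*) [Group X] [Finite X]
    (G A : Subgroup X) (hX : IsPGroup p X)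
    (hGna : ¬ ∀ a ∈ G, ∀ b ∈ G, a * b = b * a)
    (hAab : ∀ a ∈ A, ∀ b ∈ A, a * b = b * a)
    (hprod : G ⊔ A = ⊤) (hcomm : ⁅G, A⁆ = (⊥ : Subgroup X)) :
    (IsDCGroup X ↔ IsDCGroup G) ∧
    {S : Subgroup X | ∃ H : Subgroup X, S = ⁅H, H⁆} =
      {S : Subgroup X | ∃ H : Subgroup X, H ≤ G ∧ S = ⁅H, H⁆} :=
  central_product_dc_general X G A hAab hprod hcomm
end

section
/- Let G be a finite non-abelian DC p-group with nilpotency class c. Then for each i with 2 ≤ i ≤ c there exist elements a_i ∈ K_{i-1}(G) and b_i ∈ G such that K_i(G) equals the derived subgroup of ⟨a_i, b_i⟩. Consequently, for any subgroup H ≤ G with |K_i(G)| ≤ |H'|, one has K_i(G) ≤ H'. -/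
open scoped commutatorElement

namespace Subgroup

variable {G : Type*} [Group G]

theorem commutator_closure_le_of_commutatorElement_mem {s : Set G} {N : Subgroup G} [N.Normal]
    (hs : ∀ x ∈ s, ∀ y ∈ s, ⁅x, y⁆ ∈ N) : ⁅closure s, closure s⁆ ≤ N := by
  let π := QuotientGroup.mk' N
  have hcomm : ∀ x ∈ π '' s, ∀ y ∈ π '' s, x * y = y * x := by
    rintro _ ⟨x, hx, rfl⟩ _ ⟨y, hy, rfl⟩
    rw [← commutatorElement_eq_one_iff_mul_comm, ← map_commutatorElement,
      QuotientGroup.mk'_apply, QuotientGroup.eq_one_iff]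
    exact hs x hx y hy
  have := isMulCommutative_closure hcomm
  rw [← QuotientGroup.ker_mk' N, ← map_eq_bot_iff, map_commutator, MonoidHom.map_closure,
    commutator_eq_bot_iff_le_centralizer, le_centralizer_iff_isMulCommutative]
  infer_instance

theorem lowerCentralSeries_succ_eq_iSup_commutator_closure_pair (n : ℕ) :
    (⊤ : Subgroup G).lowerCentralSeries (n + 1) =
      ⨆ (a : (⊤ : Subgroup G).lowerCentralSeries n) (b : G),
        ⁅closure {(a : G), b}, closure {(a : G), b}⁆ := by
  rw [lowerCentralSeries_succ]
  apply le_antisymm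
  · rw [commutator_le]
    intro a ha b _
    exact mem_iSup_of_mem ⟨a, ha⟩ <| mem_iSup_of_mem b <|
      commutator_mem_commutator (subset_closure (by simp)) (subset_closure (by simp))
  · refine iSup₂_le fun ⟨a, ha⟩ b => commutator_closure_le_of_commutatorElement_mem ?_
    have hab : ⁅a, b⁆ ∈ ⁅(⊤ : Subgroup G).lowerCentralSeries n, ⊤⁆ :=
      commutator_mem_commutator ha (mem_top b)
    have hba : ⁅b, a⁆ ∈ ⁅(⊤ : Subgroup G).lowerCentralSeries n, ⊤⁆ :=
      commutatorElement_inv a b ▸ inv_mem hab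
    simp only [Set.mem_insert_iff, Set.mem_singleton_iff]
    rintro x (rfl | rfl) y (rfl | rfl) <;> simp [hab, hba]

end Subgroup

namespace IsDCGroup

variable {G : Type*} [Group G] [Finite G]

theorem exists_iSup_commutator_eq (hdc : IsDCGroup G) {ι : Type*} [Nonempty ι]
    (f : ι → Subgroup G) : ∃ i, ⨆ j, ⁅f j, f j⁆ = ⁅f i, f i⁆ := by
  obtain ⟨_, ⟨i, rfl⟩, hmax⟩ :=
    (Set.range fun j => ⁅f j, f j⁆).toFinite.exists_maximal (Set.range_nonempty _)
  refine ⟨i, le_antisymm (iSup_le fun j => ?_) (le_iSup (fun j => ⁅f j, f j⁆) i)⟩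
  exact (hdc (f j) (f i)).elim id (hmax ⟨j, rfl⟩)

theorem commutator_le_of_card_le (hdc : IsDCGroup G) {H K : Subgroup G}
    (hcard : Nat.card (⁅K, K⁆ : Subgroup G) ≤ Nat.card (⁅H, H⁆ : Subgroup G)) : ⁅K, K⁆ ≤ ⁅H, H⁆ :=
  (hdc K H).elim id fun h => (Subgroup.eq_of_le_of_card_ge h hcard).ge

end IsDCGroup

theorem dc_lcs_two_generated_general (G : Type*) [Group G] [Finite G]
    [Group.IsNilpotent G] (hdc : IsDCGroup G) :
    ∀ i : ℕ, 2 ≤ i → i ≤ Group.nilpotencyClass G →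
      (∃ a ∈ (⊤ : Subgroup G).lowerCentralSeries (i - 2), ∃ b : G,
        (⊤ : Subgroup G).lowerCentralSeries (i - 1) =
          ⁅Subgroup.closure {a, b}, Subgroup.closure {a, b}⁆) ∧
      ∀ H : Subgroup G, Nat.card ↥((⊤ : Subgroup G).lowerCentralSeries (i - 1)) ≤ Nat.card ↥(⁅H, H⁆ : Subgroup G) →
        (⊤ : Subgroup G).lowerCentralSeries (i - 1) ≤ ⁅H, H⁆ := by
  intro i hi _
  obtain ⟨n, rfl⟩ : ∃ n, i = n + 2 := ⟨i - 2, by omega⟩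
  rw [show n + 2 - 1 = n + 1 by omega, Nat.add_sub_cancel]
  obtain ⟨⟨a, b⟩, hab⟩ := hdc.exists_iSup_commutator_eq
    fun q : (⊤ : Subgroup G).lowerCentralSeries n × G => Subgroup.closure {(q.1 : G), q.2}
  rw [iSup_prod, ← Subgroup.lowerCentralSeries_succ_eq_iSup_commutator_closure_pair] at hab
  rw [hab]
  exact ⟨⟨a, a.2, b, rfl⟩, fun H => hdc.commutator_le_of_card_le⟩

theorem dc_lcs_two_generated (p : ℕ) [Fact p.Prime] (G : Type*) [Group G] [Finite G]
    [Group.IsNilpotent G] (hG : IsPGroup p G) (hdc : IsDCGroup G)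
    (hna : ¬ ∀ a b : G, a * b = b * a) :
    ∀ i : ℕ, 2 ≤ i → i ≤ Group.nilpotencyClass G →
      (∃ a ∈ (⊤ : Subgroup G).lowerCentralSeries (i - 2), ∃ b : G,
        (⊤ : Subgroup G).lowerCentralSeries (i - 1) =
          ⁅Subgroup.closure {a, b}, Subgroup.closure {a, b}⁆) ∧
      ∀ H : Subgroup G, Nat.card ↥((⊤ : Subgroup G).lowerCentralSeries (i - 1)) ≤ Nat.card ↥(⁅H, H⁆ : Subgroup G) →
        (⊤ : Subgroup G).lowerCentralSeries (i - 1) ≤ ⁅H, H⁆ :=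
  dc_lcs_two_generated_general G hdc
end

section
/- Let G be a finite non-abelian DC p-group with an abelian maximal subgroup. Then d(G') ≤ p − 1. -/
/-!
Let `M` be an abelian maximal subgroup and `b ∉ M`. Then `M` is normal of index `p`, so
`b ^ p ∈ M` and `G = ⟨M, b⟩`. By the DC property there is `a ∈ M` such that `⟨a, b⟩'` contains
every `⟨m, b⟩'`, in particular every `⁅m, b⁆` with `m ∈ M`. The conjugates
`c k = conjPow b ⁅a, b⁆ k = b ^ k * ⁅a, b⁆ * (b ^ k)⁻¹` lie in `M`, so `M` centralizes them, and `c (k + p) = c k`;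
moreover `1 = ⁅a, b ^ p⁆ = c 0 * c 1 * ⋯ * c (p - 1)`, so `c 0, …, c (p - 2)` generate a
subgroup `Q` normalized by `M` and by `b`, hence normal. Every commutator of two elements of
`M ∪ {b}` lies in `Q`, so `G' = Q` is generated by `p - 1` elements.
-/

open scoped commutatorElement

section

open Subgroup hiding commutator

variable {G : Type*} [Group G]

namespace Subgroup

theorem commutator_closure_le {S : Set G} {N : Subgroup G} [N.Normal]
    (h : ∀ s ∈ S, ∀ t ∈ S, ⁅s, t⁆ ∈ N) : ⁅closure S, closure S⁆ ≤ N := by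
  rw [← QuotientGroup.ker_mk' N, ← map_eq_bot_iff, map_commutator, MonoidHom.map_closure,
    commutator_eq_bot_iff_le_centralizer, centralizer_closure, closure_le]
  rintro _ ⟨s, hs, rfl⟩ _ ⟨t, ht, rfl⟩
  rw [← commutatorElement_eq_one_iff_mul_comm, ← map_commutatorElement, ← MonoidHom.mem_ker,
    QuotientGroup.ker_mk']
  exact h t ht s hs

theorem mem_normalizer_closure_of_conj_mem [Finite G] {S : Set G} {g : G}
    (h : ∀ s ∈ S, g * s * g⁻¹ ∈ closure S) : g ∈ normalizer (closure S) := by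
  have hle : (closure S).map (MulAut.conj g) ≤ closure S := by
    rw [MonoidHom.map_closure, closure_le]
    rintro _ ⟨s, hs, rfl⟩
    exact h s hs
  exact mem_normalizer_iff_map_conj_eq.mpr <| eq_of_le_of_card_ge hle
    (card_map_of_injective (MulAut.conj g).injective).ge

theorem closure_insert_eq_top_of_isCoatom {M : Subgroup G} (hM : IsCoatom M) {b : G}
    (hb : b ∉ M) : closure (insert b (M : Set G)) = ⊤ :=
  hM.2 _ <| SetLike.lt_iff_le_and_exists.mpr
    ⟨fun _ hm ↦ subset_closure (Set.mem_insert_of_mem b hm), b,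
      subset_closure (Set.mem_insert b _), hb⟩

theorem rank_closure_image_Iio_le (f : ℕ → G) (n : ℕ) :
    Group.rank (closure (f '' Set.Iio n)) ≤ n := by
  calc Group.rank (closure (f '' Set.Iio n))
      ≤ Nat.card (f '' Set.Iio n) := rank_closure_finite_le_nat_card _
    _ ≤ Nat.card (Set.Iio n) := Nat.card_image_le (Set.finite_Iio n)
    _ = n := by simp

end Subgroup

theorem IsPGroup.index_eq_of_isCoatom {p : ℕ} [Fact p.Prime] [Finite G] (hG : IsPGroup p G)
    {M : Subgroup G} (hM : IsCoatom M) : M.index = p := by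
  obtain ⟨n, hn⟩ := IsPGroup.iff_card.mp (hG.to_subgroup M)
  obtain ⟨k, hk⟩ := hG.index M
  have hk0 : k ≠ 0 := by
    rintro rfl
    exact hM.1 (index_eq_one.mp (by simpa using hk))
  have hcard := M.card_mul_index
  obtain ⟨K, hK, hMK⟩ := Sylow.exists_subgroup_card_pow_succ (G := G)
    (by rw [← hcard, hn, hk, pow_succ]; exact mul_dvd_mul_left _ (dvd_pow_self p hk0)) hn
  have hKtop : K = ⊤ := hM.2 K <| hMK.lt_of_ne <| by
    rintro rfl
    rw [hn] at hK
    exact (Nat.pow_lt_pow_right (Fact.out : p.Prime).one_lt n.lt_succ_self).ne hK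
  rw [hn, hk, ← card_top, ← hKtop, hK, pow_succ] at hcard
  rw [hk, Nat.eq_of_mul_eq_mul_left (pow_pos (Fact.out : p.Prime).pos n) hcard]

theorem IsDCGroup.exists_forall_commutator_le (hdc : IsDCGroup G) {ι : Type*} [Finite ι]
    [Nonempty ι] (H : ι → Subgroup G) : ∃ i, ∀ j, ⁅H j, H j⁆ ≤ ⁅H i, H i⁆ := by
  obtain ⟨i, -, hi⟩ := Set.Finite.exists_maximalFor (fun i ↦ ⁅H i, H i⁆) Set.univ
    Set.finite_univ Set.univ_nonempty
  exact ⟨i, fun j ↦ (hdc (H j) (H i)).elim id (hi trivial)⟩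

section conjPow

def conjPow (b x : G) (k : ℕ) : G := b ^ k * x * (b ^ k)⁻¹

theorem conjPow_succ (b x : G) (k : ℕ) : conjPow b x (k + 1) = b * conjPow b x k * b⁻¹ := by
  simp only [conjPow]
  group

theorem conjPow_mem {N : Subgroup G} [N.Normal] (b : G) {x : G} (hx : x ∈ N) (k : ℕ) : conjPow b x k ∈ N :=
  Normal.conj_mem inferInstance x hx _

theorem conjPow_periodic {b x : G} {n : ℕ} (h : Commute (b ^ n) x) :
    Function.Periodic (conjPow b x) n := fun k ↦ by
  have hx : b ^ n * x * (b ^ n)⁻¹ = x := by rw [h.eq, mul_inv_cancel_right]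
  simp only [conjPow]
  conv_rhs => rw [← hx]
  group

theorem commutatorElement_pow_succ (a b : G) (k : ℕ) :
    ⁅a, b ^ (k + 1)⁆ = ⁅a, b ^ k⁆ * conjPow b ⁅a, b⁆ k := by
  simp only [conjPow, commutatorElement_def]
  group

theorem commutatorElement_pow_mem_closure (a b : G) (n : ℕ) :
    ⁅a, b ^ n⁆ ∈ closure (conjPow b ⁅a, b⁆ '' Set.Iio n) := by
  induction n with
  | zero => simp
  | succ n ih =>
    rw [commutatorElement_pow_succ]
    exact mul_mem (closure_mono (Set.image_mono (Set.Iio_subset_Iio n.le_succ)) ih)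
      (subset_closure ⟨n, n.lt_succ_self, rfl⟩)

theorem conjPow_mem_closure {a b : G} {n : ℕ} (hn : 0 < n) (h : Commute a (b ^ n)) (k : ℕ) :
    conjPow b ⁅a, b⁆ k ∈ closure (conjPow b ⁅a, b⁆ '' Set.Iio (n - 1)) := by
  have hb : Commute (b ^ n) b := (Commute.self_pow b n).symm
  have hper : Function.Periodic (conjPow b ⁅a, b⁆) n := conjPow_periodic <| by
    rw [commutatorElement_def]
    exact ((h.symm.mul_right hb).mul_right h.symm.inv_right).mul_right hb.inv_right
  rw [← hper.map_mod_nat]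
  rcases Nat.lt_or_ge (k % n) (n - 1) with hk | hk
  · exact subset_closure ⟨_, hk, rfl⟩
  · have hrel := commutatorElement_pow_succ a b (n - 1)
    rw [Nat.sub_add_cancel hn, commutatorElement_eq_one_iff_commute.mpr h] at hrel
    rw [show k % n = n - 1 by have := Nat.mod_lt k hn; omega,
      eq_inv_of_mul_eq_one_right hrel.symm]
    exact inv_mem (commutatorElement_pow_mem_closure a b (n - 1))

theorem closure_conjPow_commutatorElement_le_commutator (a b : G) (S : Set ℕ) :
    closure (conjPow b ⁅a, b⁆ '' S) ≤ commutator G :=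
  (closure_le _).mpr <| by
    rintro _ ⟨k, -, rfl⟩
    exact conjPow_mem b (commutator_mem_commutator (mem_top a) (mem_top b)) k

end conjPow

section AbelianCoatom

variable {M : Subgroup G} [M.Normal] {a b : G} {n : ℕ}

theorem closure_conjPow_normal [Finite G] (hM : IsCoatom M)
    (hMcomm : ∀ x ∈ M, ∀ y ∈ M, x * y = y * x) (ha : a ∈ M) (hb : b ∉ M) (hn : 0 < n)
    (hbn : b ^ n ∈ M) : (closure (conjPow b ⁅a, b⁆ '' Set.Iio (n - 1))).Normal := by
  have habM : ⁅a, b⁆ ∈ M := by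
    rw [commutatorElement_def, mul_assoc, mul_assoc, ← mul_assoc b]
    exact mul_mem ha (Normal.conj_mem inferInstance _ (inv_mem ha) b)
  rw [← normalizer_eq_top_iff]
  refine hM.2 _ (SetLike.lt_iff_le_and_exists.mpr ⟨?_, b, ?_, hb⟩)
  · refine le_normalizer_closure_iff.mpr ?_
    rintro m hm _ ⟨k, hk, rfl⟩
    rw [hMcomm m hm _ (conjPow_mem b habM k), mul_inv_cancel_right]
    exact subset_closure ⟨k, hk, rfl⟩
  · refine mem_normalizer_closure_of_conj_mem ?_
    rintro _ ⟨k, -, rfl⟩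
    rw [← conjPow_succ]
    exact conjPow_mem_closure hn (hMcomm a ha _ hbn) (k + 1)

theorem commutator_le_closure_conjPow [Finite G] (hM : IsCoatom M)
    (hMcomm : ∀ x ∈ M, ∀ y ∈ M, x * y = y * x) (ha : a ∈ M) (hb : b ∉ M) (hn : 0 < n)
    (hbn : b ^ n ∈ M)
    (hmax : ∀ m ∈ M, ⁅closure {m, b}, closure {m, b}⁆ ≤ ⁅closure {a, b}, closure {a, b}⁆) :
    commutator G ≤ closure (conjPow b ⁅a, b⁆ '' Set.Iio (n - 1)) := by
  set Q := closure (conjPow b ⁅a, b⁆ '' Set.Iio (n - 1))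
  have : Q.Normal := closure_conjPow_normal hM hMcomm ha hb hn hbn
  have hab : ⁅a, b⁆ ∈ Q := by simpa [conjPow] using conjPow_mem_closure hn (hMcomm a ha _ hbn) 0
  have hD : ⁅closure {a, b}, closure {a, b}⁆ ≤ Q := commutator_closure_le <| by
    rintro s (rfl | rfl) t (rfl | rfl)
    · simp
    · exact hab
    · rw [← commutatorElement_inv]
      exact inv_mem hab
    · simp
  have hmb : ∀ m ∈ M, ⁅m, b⁆ ∈ Q := fun m hm ↦ hD <| hmax m hm <|
    commutator_mem_commutator (subset_closure (by simp)) (subset_closure (by simp))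
  rw [commutator_def, ← closure_insert_eq_top_of_isCoatom hM hb]
  refine commutator_closure_le ?_
  rintro s (rfl | hs) t (rfl | ht)
  · simp
  · rw [← commutatorElement_inv]
    exact inv_mem (hmb t ht)
  · exact hmb s hs
  · rw [commutatorElement_eq_one_iff_mul_comm.mpr (hMcomm s hs t ht)]
    exact one_mem Q

end AbelianCoatom

end

theorem dc_abelian_max_rank_general (p : ℕ) [Fact p.Prime] (G : Type*) [Group G] [Finite G]
    (hG : IsPGroup p G) (hdc : IsDCGroup G)
    (hmax : ∃ M : Subgroup G, IsCoatom M ∧ ∀ a ∈ M, ∀ b ∈ M, a * b = b * a) :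
    Group.rank ↥(commutator G) ≤ p - 1 := by
  obtain ⟨M, hM, hMcomm⟩ := hmax
  have := hG.isNilpotent
  have : M.Normal := Subgroup.NormalizerCondition.normal_of_coatom M
    Group.normalizerCondition_of_isNilpotent hM
  obtain ⟨b, hb⟩ := SetLike.exists_not_mem_of_ne_top M hM.1
  have hbp : b ^ p ∈ M := hG.index_eq_of_isCoatom hM ▸ M.pow_index_mem b
  obtain ⟨⟨a, ha⟩, ha_max⟩ :=
    hdc.exists_forall_commutator_le fun m : M ↦ Subgroup.closure {(m : G), b}
  have hG' : commutator G = Subgroup.closure (conjPow b ⁅a, b⁆ '' Set.Iio (p - 1)) :=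
    le_antisymm
      (commutator_le_closure_conjPow hM hMcomm ha hb (Fact.out : p.Prime).pos hbp
        fun m hm ↦ ha_max ⟨m, hm⟩)
      (closure_conjPow_commutatorElement_le_commutator a b _)
  rw [Subgroup.rank_congr hG']
  exact Subgroup.rank_closure_image_Iio_le _ _

theorem dc_abelian_max_rank (p : ℕ) [Fact p.Prime] (G : Type*) [Group G] [Finite G]
    (hG : IsPGroup p G) (hdc : IsDCGroup G)
    (hna : ¬ ∀ a b : G, a * b = b * a)
    (hmax : ∃ M : Subgroup G, IsCoatom M ∧ ∀ a ∈ M, ∀ b ∈ M, a * b = b * a) :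
    Group.rank ↥(commutator G) ≤ p - 1 :=
  dc_abelian_max_rank_general p G hG hdc hmax
end
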